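/- arXiv:2102.12356 — 3 statements merged into one kernel-verified Lean document; each statement's English description precedes it below -/
import Mathlib

section
/- Let A be an n×n real matrix that is weakly chained diagonally dominant: (i) for every row i, |A(i,i)| ≥ Σ_{j≠i} |A(i,j)|, and (ii) for every row r₀ there is a finite sequence of rows r₀, r₁, …, r_t with A(r_{i-1}, r_i) ≠ 0 for all 1 ≤ i ≤ t and |A(r_t,r_t)| > Σ_{j≠r_t} |A(r_t,j)|. Then A is nonsingular. -/
/-!
Suppose `A v = 0` with `v ≠ 0` and let `i` be a row where `|v i|` is maximal. Row `i` of `A v = 0`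
gives `|A i i| |v i| ≤ ∑_{j ≠ i} |A i j| |v j| ≤ (∑_{j ≠ i} |A i j|) |v i|`, so weak diagonal
dominance forces equality throughout: `|v j| = |v i|` whenever `A i j ≠ 0`. Hence `|v|` stays
maximal along the chain starting at `i`, and at its strictly dominant end the same estimate
gives `|v| = 0` there, hence everywhere.
-/

open Finset

namespace Matrix

variable {ι K : Type*} [Fintype ι] [DecidableEq ι] [Field K] [LinearOrder K] [IsStrictOrderedRing K]
  {A : Matrix ι ι K} {v : ι → K}

theorem abs_diag_mul_le_sum_of_mulVec_eq_zero (hv : A *ᵥ v = 0) (i : ι) :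
    |A i i| * |v i| ≤ ∑ j ∈ univ.erase i, |A i j| * |v j| := by
  have hrow : A i i * v i = -∑ j ∈ univ.erase i, A i j * v j := by
    have h0 : ∑ j, A i j * v j = 0 := congrFun hv i
    rw [← sum_erase_add _ _ (mem_univ i)] at h0
    linarith
  calc |A i i| * |v i| = |∑ j ∈ univ.erase i, A i j * v j| := by rw [← abs_mul, hrow, abs_neg]
    _ ≤ ∑ j ∈ univ.erase i, |A i j * v j| := abs_sum_le_sum_abs _ _
    _ = ∑ j ∈ univ.erase i, |A i j| * |v j| := by simp only [abs_mul]

theorem sum_abs_mul_le_of_forall_abs_le {i : ι} (hmax : ∀ j, |v j| ≤ |v i|) :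
    ∑ j ∈ univ.erase i, |A i j| * |v j| ≤ (∑ j ∈ univ.erase i, |A i j|) * |v i| := by
  rw [sum_mul]
  exact sum_le_sum fun j _ => mul_le_mul_of_nonneg_left (hmax j) (abs_nonneg _)

theorem forall_abs_le_of_mulVec_eq_zero_of_ne_zero (hv : A *ᵥ v = 0) {i j : ι}
    (hdom : ∑ k ∈ univ.erase i, |A i k| ≤ |A i i|) (hmax : ∀ k, |v k| ≤ |v i|)
    (hij : A i j ≠ 0) : ∀ k, |v k| ≤ |v j| := by
  obtain rfl | hji := eq_or_ne j i
  · exact hmax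
  have hle : ∀ k ∈ univ.erase i, |A i k| * |v k| ≤ |A i k| * |v i| :=
    fun k _ => mul_le_mul_of_nonneg_left (hmax k) (abs_nonneg _)
  have hsum : ∑ k ∈ univ.erase i, |A i k| * |v k| = ∑ k ∈ univ.erase i, |A i k| * |v i| := by
    refine le_antisymm (sum_le_sum hle) ?_
    calc ∑ k ∈ univ.erase i, |A i k| * |v i| = (∑ k ∈ univ.erase i, |A i k|) * |v i| :=
          (sum_mul ..).symm
      _ ≤ |A i i| * |v i| := mul_le_mul_of_nonneg_right hdom (abs_nonneg _)
      _ ≤ _ := abs_diag_mul_le_sum_of_mulVec_eq_zero hv i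
  have hj : |v j| = |v i| :=
    mul_left_cancel₀ (abs_ne_zero.mpr hij)
      ((sum_eq_sum_iff_of_le hle).mp hsum j (mem_erase.mpr ⟨hji, mem_univ j⟩))
  exact hj ▸ hmax

theorem eq_zero_of_mulVec_eq_zero_of_forall_abs_le (hv : A *ᵥ v = 0) {i : ι}
    (hdom : ∑ k ∈ univ.erase i, |A i k| < |A i i|) (hmax : ∀ k, |v k| ≤ |v i|) : v = 0 := by
  have hvi : |v i| = 0 := by
    by_contra hne
    have hpos : 0 < |v i| := lt_of_le_of_ne (abs_nonneg _) (Ne.symm hne)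
    have := (abs_diag_mul_le_sum_of_mulVec_eq_zero hv i).trans
      (sum_abs_mul_le_of_forall_abs_le (A := A) hmax)
    exact (mul_lt_mul_of_pos_right hdom hpos).not_ge this
  funext k
  exact abs_nonpos_iff.mp (hvi ▸ hmax k)

theorem forall_abs_le_along_chain (hv : A *ᵥ v = 0)
    (hdom : ∀ i, ∑ k ∈ univ.erase i, |A i k| ≤ |A i i|) {t : ℕ} {r : ℕ → ι}
    (hchain : ∀ m < t, A (r m) (r (m + 1)) ≠ 0) (hmax : ∀ k, |v k| ≤ |v (r 0)|) :
    ∀ m ≤ t, ∀ k, |v k| ≤ |v (r m)| := by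
  intro m hm
  induction m with
  | zero => exact hmax
  | succ m ih =>
    exact forall_abs_le_of_mulVec_eq_zero_of_ne_zero hv (hdom _) (ih (by omega)) (hchain m hm)

end Matrix

/-- A weakly chained diagonally dominant real matrix is nonsingular. -/
theorem stmt2 (n : ℕ) (A : Matrix (Fin n) (Fin n) ℝ)
    (h1 : ∀ i, ∑ j ∈ Finset.univ.erase i, |A i j| ≤ |A i i|)
    (h2 : ∀ r0 : Fin n, ∃ (t : ℕ) (r : ℕ → Fin n), r 0 = r0 ∧
      (∀ i < t, A (r i) (r (i + 1)) ≠ 0) ∧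
      ∑ j ∈ Finset.univ.erase (r t), |A (r t) j| < |A (r t) (r t)|) :
    A.det ≠ 0 := by
  intro hdet
  obtain ⟨v, hv0, hv⟩ := Matrix.exists_mulVec_eq_zero_iff.mpr hdet
  have : Nonempty (Fin n) := ⟨(Function.ne_iff.mp hv0).choose⟩
  obtain ⟨i0, hi0⟩ := Finite.exists_max fun i => |v i|
  obtain ⟨t, r, rfl, hchain, hstrict⟩ := h2 i0
  exact hv0 <| Matrix.eq_zero_of_mulVec_eq_zero_of_forall_abs_le hv hstrict
    (Matrix.forall_abs_le_along_chain hv h1 hchain hi0 t le_rfl)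
end

section
/- The set of values E_x[τ_cov] attainable over all finite irreducible Markov chains with rational transition probabilities and all start states x equals (Q ∩ [1,∞)) ∪ {0}. -/
open Finset ENNReal

variable {Ω : Type*} [Fintype Ω] [DecidableEq Ω]

/-- `P` is a stochastic matrix: nonnegative entries, rows summing to 1. -/
def IsStochastic (P : Ω → Ω → ℝ) : Prop :=
  (∀ x y, 0 ≤ P x y) ∧ ∀ x, ∑ y, P x y = 1

/-- All transition probabilities are rational numbers. -/
def IsRationalKernel (P : Ω → Ω → ℝ) : Prop := ∀ x y, ∃ q : ℚ, P x y = (q : ℝ)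

/-- `hitSurvive P S t x` is the probability that the chain with kernel `P` started
at `x` has not visited the set `S` by time `t`, i.e. `ℙ_x(τ_S > t)`. -/
def hitSurvive (P : Ω → Ω → ℝ) (S : Finset Ω) : ℕ → Ω → ℝ
  | 0, x => if x ∈ S then 0 else 1
  | t + 1, x => if x ∈ S then 0 else ∑ y, P x y * hitSurvive P S t y

/-- The expected hitting time `𝔼_x[τ_S] = ∑_{t ≥ 0} ℙ_x(τ_S > t)`, as an
extended nonnegative real (so it may be `⊤ = ∞`). -/
noncomputable def hitExp (P : Ω → Ω → ℝ) (S : Finset Ω) (x : Ω) : ℝ≥0∞ :=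
  ∑' t : ℕ, ENNReal.ofReal (hitSurvive P S t x)

/-- `covSurvive P t x A` : probability that, having currently visited exactly the
set `A` and standing at `x`, the chain has not covered `Ω` after `t` more steps. -/
def covSurvive (P : Ω → Ω → ℝ) : ℕ → Ω → Finset Ω → ℝ
  | 0, _, A => if A = Finset.univ then 0 else 1
  | t + 1, x, A => if A = Finset.univ then 0 else
      ∑ y, P x y * covSurvive P t y (insert y A)

/-- The expected cover time `𝔼_x[τ_cov] = ∑_{t ≥ 0} ℙ_x(τ_cov > t)`. -/
noncomputable def covExp (P : Ω → Ω → ℝ) (x : Ω) : ℝ≥0∞ :=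
  ∑' t : ℕ, ENNReal.ofReal (covSurvive P t x {x})

/-- `matPow P t x y` is the `t`-step transition probability `P^t(x,y)`. -/
def matPow (P : Ω → Ω → ℝ) : ℕ → Ω → Ω → ℝ
  | 0 => fun a b => if a = b then 1 else 0
  | t + 1 => fun a c => ∑ b, P a b * matPow P t b c

/-- Irreducibility: every state can reach every state. -/
def IsIrreducibleChain (P : Ω → Ω → ℝ) : Prop := ∀ x y, ∃ t : ℕ, 0 < matPow P t x y

/-!
Recording the visited set turns the cover time into an absorption time: the pair (position,
visited set) is a Markov chain on a finite space, killed once every state has been visited, whose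
kernel `Q` has rational entries. Irreducibility lets this chain leak out of every state, so
`Qᵗ → 0`; hence `1 - Q` is invertible and the expected cover time is a coordinate of
`(1 - Q)⁻¹ Q 1`, a rational number, which is at least `1` as soon as there are two states.
Conversely, the chain on `{0, 1}` that leaves `0` with probability `1/q` and always returns has a
geometric cover time of mean `q`.
-/

open Filter Topology

lemma tendsto_zero_of_submultiplicative {M : ℕ → ℝ} (h0 : ∀ t, 0 ≤ M t) (hanti : Antitone M)
    (hmul : ∀ s t, M (s + t) ≤ M s * M t) {N : ℕ} (hN0 : N ≠ 0) (hN : M N < 1) :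
    Tendsto M atTop (𝓝 0) := by
  have hpow : ∀ k, M (k * N) ≤ M 0 * M N ^ k := by
    intro k
    induction k with
    | zero => simp
    | succ k ih =>
      calc M ((k + 1) * N) = M (k * N + N) := by rw [add_mul, one_mul]
        _ ≤ M (k * N) * M N := hmul _ _
        _ ≤ M 0 * M N ^ k * M N := mul_le_mul_of_nonneg_right ih (h0 N)
        _ = M 0 * M N ^ (k + 1) := by ring
  have hlim : Tendsto (fun t => M 0 * M N ^ (t / N)) atTop (𝓝 0) := by
    simpa using ((tendsto_pow_atTop_nhds_zero_of_lt_one (h0 N) hN).comp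
      (Nat.tendsto_div_const_atTop hN0)).const_mul (M 0)
  exact squeeze_zero h0 (fun t => (hanti (Nat.div_mul_le_self t N)).trans (hpow _)) hlim

namespace Matrix

lemma map_nonsing_inv {ι K L : Type*} [Fintype ι] [DecidableEq ι] [Field K] [Field L]
    (f : K →+* L) (M : Matrix ι ι K) : (M.map f)⁻¹ = M⁻¹.map f := by
  rw [inv_def, inv_def, ← RingHom.mapMatrix_apply, ← RingHom.map_adjugate, ← RingHom.map_det,
    Ring.inverse_eq_inv', Ring.inverse_eq_inv', ← map_inv₀]
  ext i j
  simp

section OrderedSemiring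

variable {m n R : Type*} [Fintype n] [Semiring R] [PartialOrder R] [IsOrderedRing R]

lemma mulVec_le_mulVec {A : Matrix m n R} (hA : ∀ i j, 0 ≤ A i j) {v w : n → R} (h : v ≤ w) :
    A *ᵥ v ≤ A *ᵥ w :=
  fun i => sum_le_sum fun j _ => mul_le_mul_of_nonneg_left (h j) (hA i j)

lemma mulVec_nonneg {A : Matrix m n R} (hA : ∀ i j, 0 ≤ A i j) {v : n → R} (hv : 0 ≤ v) :
    0 ≤ A *ᵥ v := by
  simpa using mulVec_le_mulVec hA hv

lemma pow_mulVec_one_antitone [DecidableEq n] {A : Matrix n n R} (hA : ∀ i j, 0 ≤ A i j)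
    (hA1 : A *ᵥ 1 ≤ 1) : Antitone fun t => A ^ t *ᵥ (1 : n → R) :=
  antitone_nat_of_succ_le fun t => by
    rw [pow_succ, ← mulVec_mulVec]
    exact mulVec_le_mulVec (pow_apply_nonneg hA t) hA1

end OrderedSemiring

lemma norm_mulVec_le_of_nonneg {m n : Type*} [Fintype m] [Fintype n] {A : Matrix m n ℝ}
    (hA : ∀ i j, 0 ≤ A i j) (v : n → ℝ) : ‖A *ᵥ v‖ ≤ ‖A *ᵥ 1‖ * ‖v‖ := by
  refine (pi_norm_le_iff_of_nonneg (by positivity)).2 fun i => ?_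
  calc ‖(A *ᵥ v) i‖ = |∑ j, A i j * v j| := rfl
    _ ≤ ∑ j, A i j * ‖v‖ := (abs_sum_le_sum_abs _ _).trans <| sum_le_sum fun j _ => by
        rw [abs_mul, abs_of_nonneg (hA i j)]
        exact mul_le_mul_of_nonneg_left (norm_le_pi_norm v j) (hA i j)
    _ = (A *ᵥ 1) i * ‖v‖ := by simp [mulVec, dotProduct, sum_mul]
    _ ≤ ‖A *ᵥ 1‖ * ‖v‖ :=
        mul_le_mul_of_nonneg_right ((le_abs_self _).trans (norm_le_pi_norm (A *ᵥ 1) i))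
          (norm_nonneg v)

section Substochastic

variable {ι : Type*} [Fintype ι] [DecidableEq ι] {Q : Matrix ι ι ℝ}

theorem tendsto_pow_mulVec_nhds_zero (hQ : ∀ i j, 0 ≤ Q i j) (hQ1 : Q *ᵥ 1 ≤ 1)
    (hleak : ∀ i, ∃ t, (Q ^ t *ᵥ 1) i < 1) (v : ι → ℝ) :
    Tendsto (fun t => Q ^ t *ᵥ v) atTop (𝓝 0) := by
  have hnonneg : ∀ t, 0 ≤ Q ^ t *ᵥ (1 : ι → ℝ) := fun t =>
    mulVec_nonneg (pow_apply_nonneg hQ t) zero_le_one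
  set M : ℕ → ℝ := fun t => ‖Q ^ t *ᵥ (1 : ι → ℝ)‖
  have hmul : ∀ s t, M (s + t) ≤ M s * M t := fun s t => by
    simpa only [M, pow_add, mulVec_mulVec] using
      norm_mulVec_le_of_nonneg (pow_apply_nonneg hQ s) (Q ^ t *ᵥ 1)
  have hanti : Antitone M := fun s t hst =>
    (pi_norm_le_iff_of_nonneg (norm_nonneg _)).2 fun i => by
      rw [Real.norm_of_nonneg (hnonneg t i)]
      exact (pow_mulVec_one_antitone hQ hQ1 hst i).trans
        ((le_abs_self _).trans (norm_le_pi_norm (Q ^ s *ᵥ 1) i))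
  choose T hT using hleak
  have hN : M (univ.sup T + 1) < 1 := (pi_norm_lt_iff one_pos).2 fun i => by
    rw [Real.norm_of_nonneg (hnonneg _ i)]
    exact (pow_mulVec_one_antitone hQ hQ1 ((le_sup (mem_univ i)).trans (Nat.le_succ _)) i).trans_lt
      (hT i)
  have hM := tendsto_zero_of_submultiplicative (fun t => norm_nonneg _) hanti hmul
    (Nat.succ_ne_zero _) hN
  exact squeeze_zero_norm (fun t => norm_mulVec_le_of_nonneg (pow_apply_nonneg hQ t) v)
    (by simpa using hM.mul_const ‖v‖)

theorem isUnit_det_one_sub (hQ : ∀ i j, 0 ≤ Q i j) (hQ1 : Q *ᵥ 1 ≤ 1)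
    (hleak : ∀ i, ∃ t, (Q ^ t *ᵥ 1) i < 1) : IsUnit (1 - Q).det := by
  rw [isUnit_iff_ne_zero, Ne, ← exists_mulVec_eq_zero_iff]
  rintro ⟨v, hv0, hv⟩
  have hfix : Q *ᵥ v = v := by
    rw [sub_mulVec, one_mulVec, sub_eq_zero] at hv
    exact hv.symm
  have hpow : ∀ t, Q ^ t *ᵥ v = v := fun t => by
    induction t with
    | zero => simp
    | succ t ih => rw [pow_succ, ← mulVec_mulVec, hfix, ih]
  exact hv0 <| tendsto_nhds_unique (tendsto_const_nhds.congr fun t => (hpow t).symm)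
    (tendsto_pow_mulVec_nhds_zero hQ hQ1 hleak v)

theorem hasSum_pow_mulVec (hQ : ∀ i j, 0 ≤ Q i j) (hQ1 : Q *ᵥ 1 ≤ 1)
    (hleak : ∀ i, ∃ t, (Q ^ t *ᵥ 1) i < 1) {b : ι → ℝ} (hb : 0 ≤ b) :
    HasSum (fun t => Q ^ t *ᵥ b) ((1 - Q)⁻¹ *ᵥ b) := by
  have hpartial : ∀ T, ∑ t ∈ range T, Q ^ t *ᵥ b = (1 - Q)⁻¹ *ᵥ (b - Q ^ T *ᵥ b) := fun T => by
    rw [← sum_mulVec, ← nonsing_inv_mul_cancel_left _ (∑ t ∈ range T, Q ^ t)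
      (isUnit_det_one_sub hQ hQ1 hleak), mul_neg_geom_sum, ← mulVec_mulVec, sub_mulVec,
      one_mulVec]
  have hlim : Tendsto (fun T => ∑ t ∈ range T, Q ^ t *ᵥ b) atTop (𝓝 ((1 - Q)⁻¹ *ᵥ b)) := by
    simp_rw [hpartial]
    have hcont : Continuous fun v : ι → ℝ => (1 - Q)⁻¹ *ᵥ v :=
      continuous_const.matrix_mulVec continuous_id
    have h := (hcont.tendsto (b - 0)).comp
      (tendsto_const_nhds.sub (tendsto_pow_mulVec_nhds_zero hQ hQ1 hleak b))
    rw [sub_zero] at h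
    exact h
  refine Pi.hasSum.2 fun i => (hasSum_iff_tendsto_nat_of_nonneg
    (fun t => mulVec_nonneg (pow_apply_nonneg hQ t) hb i) _).2 ?_
  simpa only [Finset.sum_apply] using tendsto_pi_nhds.1 hlim i

end Substochastic

end Matrix

open Matrix

/-- The chain `(Xₜ, {X₀, …, Xₜ})` of positions and visited sets, killed once every state has been
visited. -/
def coverKernel {R : Type*} [Zero R] (P : Ω → Ω → R) :
    Matrix (Ω × Finset Ω) (Ω × Finset Ω) R :=
  Matrix.of fun i j => if i.2 ≠ univ ∧ j.2 = insert j.1 i.2 then P i.1 j.1 else 0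

lemma coverKernel_map {R S : Type*} [Zero R] [Zero S] (P : Ω → Ω → R) {f : R → S}
    (hf : f 0 = 0) : (coverKernel P).map f = coverKernel fun x y => f (P x y) := by
  ext i j
  simp only [coverKernel, map_apply, of_apply]
  split_ifs <;> simp [hf]

section CoverChain

variable {P : Ω → Ω → ℝ}

lemma coverKernel_mulVec_apply (v : Ω × Finset Ω → ℝ) (x : Ω) (A : Finset Ω) :
    (coverKernel P *ᵥ v) (x, A) = if A = univ then 0 else ∑ y, P x y * v (y, insert y A) := by
  simp only [mulVec, dotProduct, coverKernel, of_apply, Fintype.sum_prod_type]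
  split_ifs with hA
  · simp [hA]
  · refine sum_congr rfl fun y _ => ?_
    rw [sum_eq_single (insert y A) (fun B _ hB => by simp [hB]) (by simp)]
    simp [hA]

lemma coverKernel_nonneg (hP : IsStochastic P) (i j : Ω × Finset Ω) : 0 ≤ coverKernel P i j := by
  simp only [coverKernel, of_apply]
  split_ifs
  exacts [hP.1 _ _, le_rfl]

lemma coverKernel_mulVec_one (hP : IsStochastic P) :
    coverKernel P *ᵥ 1 = fun i => if i.2 = univ then 0 else 1 := by
  funext ⟨x, A⟩
  simp [coverKernel_mulVec_apply, hP.2 x]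

lemma coverKernel_mulVec_one_le (hP : IsStochastic P) : coverKernel P *ᵥ 1 ≤ 1 := by
  intro i
  rw [coverKernel_mulVec_one hP, Pi.one_apply]
  dsimp only
  split_ifs <;> norm_num

lemma covSurvive_eq_pow_mulVec (hP : IsStochastic P) (t : ℕ) :
    (fun i : Ω × Finset Ω => covSurvive P t i.1 i.2) =
      coverKernel P ^ t *ᵥ (coverKernel P *ᵥ 1) := by
  induction t with
  | zero =>
    rw [pow_zero, one_mulVec, coverKernel_mulVec_one hP]
    rfl
  | succ t ih =>
    rw [pow_succ', ← mulVec_mulVec, ← ih]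
    funext ⟨x, A⟩
    rw [coverKernel_mulVec_apply]
    rfl

lemma covSurvive_nonneg (hP : IsStochastic P) (t : ℕ) (x : Ω) (A : Finset Ω) :
    0 ≤ covSurvive P t x A := by
  rw [show covSurvive P t x A = _ from congrFun (covSurvive_eq_pow_mulVec hP t) (x, A)]
  exact mulVec_nonneg (pow_apply_nonneg (coverKernel_nonneg hP) t)
    (mulVec_nonneg (coverKernel_nonneg hP) zero_le_one) _

lemma covSurvive_le_one (hP : IsStochastic P) (t : ℕ) (x : Ω) (A : Finset Ω) :
    covSurvive P t x A ≤ 1 := by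
  rw [show covSurvive P t x A = _ from congrFun (covSurvive_eq_pow_mulVec hP t) (x, A),
    mulVec_mulVec, ← pow_succ]
  simpa using pow_mulVec_one_antitone (coverKernel_nonneg hP) (coverKernel_mulVec_one_le hP)
    (Nat.zero_le (t + 1)) (x, A)

lemma covSurvive_univ (t : ℕ) (x : Ω) : covSurvive P t x univ = 0 := by
  cases t <;> simp [covSurvive]

lemma covSurvive_succ_lt_one (hP : IsStochastic P) {t : ℕ} {x y : Ω} {B : Finset Ω}
    (hxy : 0 < P x y) (hy : covSurvive P t y (insert y B) < 1) : covSurvive P (t + 1) x B < 1 := by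
  by_cases hB : B = univ
  · simp [hB, covSurvive_univ]
  have hrest : ∑ w ∈ univ.erase y, P x w * covSurvive P t w (insert w B) ≤
      ∑ w ∈ univ.erase y, P x w :=
    sum_le_sum fun w _ => mul_le_of_le_one_right (hP.1 x w) (covSurvive_le_one hP t w _)
  have hrow := add_sum_erase univ (P x) (mem_univ y)
  rw [hP.2 x] at hrow
  rw [covSurvive, if_neg hB, ← add_sum_erase _ _ (mem_univ y)]
  nlinarith

lemma exists_pos_of_matPow_succ_pos (hP : ∀ x y, 0 ≤ P x y) {s : ℕ} {x z : Ω}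
    (h : 0 < matPow P (s + 1) x z) : ∃ y, 0 < P x y ∧ 0 < matPow P s y z := by
  obtain ⟨y, -, hy⟩ := exists_lt_of_sum_lt (s := univ) (f := fun _ => (0 : ℝ))
    (by simpa [matPow] using h)
  rcases pos_and_pos_or_neg_and_neg_of_mul_pos hy with hpos | hneg
  · exact ⟨y, hpos⟩
  · exact absurd (hP x y) (not_le.2 hneg.1)

theorem exists_covSurvive_lt_one (hP : IsStochastic P) (hirr : IsIrreducibleChain P)
    (x : Ω) (A : Finset Ω) : ∃ t, covSurvive P t x A < 1 := by
  induction A using WellFoundedGT.induction generalizing x with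
  | _ A ih =>
  by_cases hA : A = univ
  · exact ⟨0, by simp [hA, covSurvive_univ]⟩
  obtain ⟨z, hz⟩ : ∃ z, z ∉ A := by
    by_contra! h
    exact hA (eq_univ_of_forall h)
  -- Follow a path of positive probability to an unvisited state `z`: on arrival the visited set
  -- has grown, so the induction hypothesis applies.
  have reach : ∀ s y B, A ⊆ B → 0 < matPow P s y z →
      ∃ t, covSurvive P t y (insert y B) < 1 := by
    intro s
    induction s with
    | zero =>
      intro y B hAB hyz
      obtain rfl : y = z := by by_contra h; simp [matPow, h] at hyz
      exact ih _ ((ssubset_iff_of_subset (hAB.trans (subset_insert _ _))).2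
        ⟨y, mem_insert_self _ _, hz⟩) y
    | succ s ihs =>
      intro y B hAB hyz
      obtain ⟨w, hyw, hwz⟩ := exists_pos_of_matPow_succ_pos hP.1 hyz
      obtain ⟨t, ht⟩ := ihs w (insert y B) (hAB.trans (subset_insert _ _)) hwz
      exact ⟨t + 1, covSurvive_succ_lt_one hP hyw ht⟩
  obtain ⟨w, -, hxw⟩ := exists_lt_of_sum_lt (s := univ) (f := fun _ => (0 : ℝ)) (g := P x)
    (by simp [hP.2 x])
  obtain ⟨s, hs⟩ := hirr w z
  obtain ⟨t, ht⟩ := reach s w A subset_rfl hs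
  exact ⟨t + 1, covSurvive_succ_lt_one hP hxw ht⟩

end CoverChain

section CoverTime

variable {P : Ω → Ω → ℝ}

theorem exists_rat_hasSum_covSurvive (hP : IsStochastic P) (hrat : IsRationalKernel P)
    (hirr : IsIrreducibleChain P) (x : Ω) (A : Finset Ω) :
    ∃ q : ℚ, HasSum (fun t => covSurvive P t x A) q := by
  choose Pq hPq using hrat
  set f := Rat.castHom ℝ
  set Qq := coverKernel Pq
  have hQ : coverKernel P = Qq.map f := by
    rw [coverKernel_map _ (map_zero f)]
    exact congrArg coverKernel (funext₂ hPq)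
  have hleak : ∀ i, ∃ t, (coverKernel P ^ t *ᵥ 1) i < 1 := fun i => by
    obtain ⟨t, ht⟩ := exists_covSurvive_lt_one hP hirr i.1 i.2
    refine ⟨t + 1, ?_⟩
    rwa [pow_succ, ← mulVec_mulVec, ← covSurvive_eq_pow_mulVec hP]
  have hsum := Pi.hasSum.1 (hasSum_pow_mulVec (coverKernel_nonneg hP)
    (coverKernel_mulVec_one_le hP) hleak (mulVec_nonneg (coverKernel_nonneg hP) zero_le_one)) (x, A)
  refine ⟨((1 - Qq)⁻¹ *ᵥ (Qq *ᵥ 1)) (x, A), ?_⟩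
  convert hsum using 1
  · exact funext fun t => congrFun (covSurvive_eq_pow_mulVec hP t) (x, A)
  · have hone : f ∘ (Qq *ᵥ 1) = Qq.map f *ᵥ 1 := funext fun i => by
      simpa using RingHom.map_mulVec f Qq 1 i
    change f _ = _
    rw [hQ, RingHom.map_mulVec, hone, ← map_nonsing_inv, ← RingHom.mapMatrix_apply, map_sub,
      map_one]
    rfl

lemma covExp_eq_ofReal (hP : IsStochastic P) {x : Ω} {c : ℝ}
    (h : HasSum (fun t => covSurvive P t x {x}) c) : covExp P x = ENNReal.ofReal c := by
  rw [covExp, ← ENNReal.ofReal_tsum_of_nonneg (fun t => covSurvive_nonneg hP t x _) h.summable,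
    h.tsum_eq]

lemma covExp_of_subsingleton [Subsingleton Ω] (P : Ω → Ω → ℝ) (x : Ω) : covExp P x = 0 := by
  have hx : ({x} : Finset Ω) = univ :=
    eq_univ_of_forall fun y => mem_singleton.2 (Subsingleton.elim y x)
  simp [covExp, hx, covSurvive_univ]

theorem covExp_eq_zero_or_rat (hP : IsStochastic P) (hrat : IsRationalKernel P)
    (hirr : IsIrreducibleChain P) (x : Ω) :
    covExp P x = 0 ∨ ∃ q : ℚ, 1 ≤ q ∧ covExp P x = ENNReal.ofReal q := by
  cases subsingleton_or_nontrivial Ω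
  · exact Or.inl (covExp_of_subsingleton P x)
  obtain ⟨q, hq⟩ := exists_rat_hasSum_covSurvive hP hrat hirr x {x}
  have hx : ({x} : Finset Ω) ≠ univ := fun h => by
    obtain ⟨y, hy⟩ := exists_ne x
    exact hy (mem_singleton.1 (h ▸ mem_univ y))
  have h1 : (1 : ℝ) ≤ q := by
    simpa [covSurvive, hx] using le_hasSum hq 0 fun t _ => covSurvive_nonneg hP t x _
  exact Or.inr ⟨q, by exact_mod_cast h1, covExp_eq_ofReal hP hq⟩

end CoverTime

def twoStateChain (p : ℝ) : Fin 2 → Fin 2 → ℝ := ![![1 - p, p], ![1, 0]]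

section TwoStateChain

variable {p : ℝ}

lemma twoStateChain_isStochastic (hp0 : 0 ≤ p) (hp1 : p ≤ 1) : IsStochastic (twoStateChain p) :=
  ⟨fun a b => by fin_cases a <;> fin_cases b <;> simp [twoStateChain, hp0, hp1],
    fun a => by fin_cases a <;> simp [twoStateChain, Fin.sum_univ_two]⟩

lemma twoStateChain_isRationalKernel (q : ℚ) : IsRationalKernel (twoStateChain q) := by
  intro a b
  fin_cases a <;> fin_cases b
  exacts [⟨1 - q, by simp [twoStateChain]⟩, ⟨q, by simp [twoStateChain]⟩,
    ⟨1, by simp [twoStateChain]⟩, ⟨0, by simp [twoStateChain]⟩]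

lemma twoStateChain_isIrreducibleChain (hp : 0 < p) : IsIrreducibleChain (twoStateChain p) :=
  fun a b => ⟨if a = b then 0 else 1, by
    fin_cases a <;> fin_cases b <;> simp [twoStateChain, matPow, hp]⟩

lemma covSurvive_twoStateChain (t : ℕ) : covSurvive (twoStateChain p) t 0 {0} = (1 - p) ^ t := by
  have hne : ({0} : Finset (Fin 2)) ≠ univ := by decide
  have hins : insert (1 : Fin 2) ({0} : Finset (Fin 2)) = univ := by decide
  induction t with
  | zero => simp [covSurvive, hne]
  | succ t ih =>
    rw [covSurvive, if_neg hne, Fin.sum_univ_two, insert_eq_of_mem (mem_singleton_self 0), hins,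
      covSurvive_univ, ih]
    simp [twoStateChain, pow_succ, mul_comm]

lemma covExp_twoStateChain (hp0 : 0 < p) (hp1 : p ≤ 1) :
    covExp (twoStateChain p) 0 = ENNReal.ofReal p⁻¹ := by
  refine covExp_eq_ofReal (twoStateChain_isStochastic hp0.le hp1) ?_
  simpa [covSurvive_twoStateChain] using
    hasSum_geometric_of_lt_one (sub_nonneg.2 hp1) (sub_lt_self 1 hp0)

end TwoStateChain

/-- The set of cover times attainable by finite irreducible rational Markov chains is
`(ℚ ∩ [1, ∞)) ∪ {0}`. -/
theorem stmt8 :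
    {c : ℝ≥0∞ | ∃ (n : ℕ) (P : Fin (n + 1) → Fin (n + 1) → ℝ) (x : Fin (n + 1)),
        IsStochastic P ∧ IsRationalKernel P ∧ IsIrreducibleChain P ∧ c = covExp P x}
      = {c : ℝ≥0∞ | ∃ q : ℚ, 1 ≤ q ∧ c = ENNReal.ofReal (q : ℝ)} ∪ {0} := by
  ext c
  simp only [Set.mem_ofPred_eq, Set.mem_union, Set.mem_singleton_iff]
  constructor
  · rintro ⟨n, P, x, hP, hrat, hirr, rfl⟩
    exact (covExp_eq_zero_or_rat hP hrat hirr x).symm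
  · rintro (⟨q, hq, rfl⟩ | rfl)
    · have hq0 : (0 : ℝ) < (q⁻¹ : ℚ) := by positivity
      have hq1 : ((q⁻¹ : ℚ) : ℝ) ≤ 1 := by exact_mod_cast inv_le_one_of_one_le₀ hq
      refine ⟨1, twoStateChain (q⁻¹ : ℚ), 0, twoStateChain_isStochastic hq0.le hq1,
        twoStateChain_isRationalKernel _, twoStateChain_isIrreducibleChain hq0, ?_⟩
      rw [covExp_twoStateChain hq0 hq1, Rat.cast_inv, inv_inv]
    · refine ⟨0, fun _ _ => 1, 0, ⟨fun _ _ => zero_le_one, fun _ => by simp⟩,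
        fun _ _ => ⟨1, by simp⟩, fun x y => ⟨0, ?_⟩, (covExp_of_subsingleton (Ω := Fin 1) _ _).symm⟩
      simp [matPow, Subsingleton.elim (α := Fin 1) x y]
end

section
/- Let P be a Markov chain with rational transition probabilities on a finite state space Ω, and suppose E_x[τ_cov] < ∞. Then E_x[τ_cov] equals the expected hitting time E_{(x,{x})}^Q[τ_C] in the auxiliary chain Q(P,1) on V = {(y,S) : S ⊆ Ω, y ∈ S}, where C = {(y,Ω) : y ∈ Ω}, and this hitting time is rational. -/
open Finset ENNReal

variable {Ω : Type*} [Fintype Ω] [DecidableEq Ω]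

/-- State space of the `k`-walk auxiliary chain: tuples of positions together with a
visited set containing all current positions. -/
abbrev AuxState (Ω : Type*) [Fintype Ω] [DecidableEq Ω] (k : ℕ) :=
  {p : (Fin k → Ω) × Finset Ω // ∀ j, p.1 j ∈ p.2}

/-- Transition matrix of the `k`-walk auxiliary chain `Q(P,k)`:
`Q((x,S),(y, S ∪ {y⁽¹⁾,…,y⁽ᵏ⁾})) = ∏_j P(x⁽ʲ⁾, y⁽ʲ⁾)`, and `0` otherwise. -/
def auxQ (P : Ω → Ω → ℝ) (k : ℕ) : AuxState Ω k → AuxState Ω k → ℝ :=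
  fun v w =>
    if w.1.2 = v.1.2 ∪ Finset.univ.image w.1.1 then ∏ j, P (v.1.1 j) (w.1.1 j) else 0

/-- Generic survival function `ℙ_v(τ_C > t)` for the chain `Q` on a finite state
space `V` and target set `C`. -/
def hitSurviveGen {V : Type*} [Fintype V] [DecidableEq V]
    (Q : V → V → ℝ) (C : Finset V) : ℕ → V → ℝ
  | 0, v => if v ∈ C then 0 else 1
  | t + 1, v => if v ∈ C then 0 else ∑ w, Q v w * hitSurviveGen Q C t w

/-- Generic expected hitting time `𝔼_v[τ_C]` for the chain `Q`. -/
noncomputable def hitExpGen {V : Type*} [Fintype V] [DecidableEq V]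
    (Q : V → V → ℝ) (C : Finset V) (v : V) : ℝ≥0∞ :=
  ∑' t : ℕ, ENNReal.ofReal (hitSurviveGen Q C t v)

/-- The single-walk auxiliary chain `Q(P,1)` on `V = {(y,S) : y ∈ S}`:
`Q((y,S),(z, S ∪ {z})) = P(y,z)`, and `0` otherwise. -/
def aux1 (P : Ω → Ω → ℝ) :
    {p : Ω × Finset Ω // p.1 ∈ p.2} → {p : Ω × Finset Ω // p.1 ∈ p.2} → ℝ :=
  fun v w => if w.1.2 = insert w.1.1 v.1.2 then P v.1.1 w.1.1 else 0

/-!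
The survival probabilities of the cover time from `(y, A)` satisfy the same recursion as the
survival probabilities of `τ_C` in `Q(P,1)` from `(y, A)`, so the two expectations agree term by
term. For rationality, let `F` be the set of states outside `C` with finite expected hitting
time and `K` the chain `Q` killed outside `F`. The expected hitting time `h`, extended by `0`
off `F` (which `ENNReal.toReal` does for free at `⊤`), solves `(1 - K) h = 𝟙_F`. The entries of
`K ^ t` are dominated by survival probabilities, which tend to `0` because their sum is finite,
so `1 - K` is invertible, and the unique solution of a nonsingular rational linear system is
rational.
-/

open Filter Topology Matrix

namespace Matrix

variable {n : Type*} [Fintype n] [DecidableEq n]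

theorem injective_mulVec_one_sub_of_tendsto_pow {R : Type*} [Ring R] [TopologicalSpace R]
    [IsTopologicalRing R] [T2Space R] {M : Matrix n n R}
    (hM : ∀ i j, Tendsto (fun t => (M ^ t) i j) atTop (𝓝 0)) :
    Function.Injective (1 - M).mulVec := by
  intro a b hab
  set y := a - b
  have hfix : M *ᵥ y = y := by
    have : (1 - M) *ᵥ y = 0 := by rw [mulVec_sub, hab, sub_self]
    rwa [sub_mulVec, one_mulVec, sub_eq_zero, eq_comm] at this
  have hpow : ∀ t : ℕ, (M ^ t) *ᵥ y = y := by
    intro t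
    induction t with
    | zero => rw [pow_zero, one_mulVec]
    | succ t ih => rw [pow_succ', ← mulVec_mulVec, ih, hfix]
  suffices y = 0 from sub_eq_zero.mp this
  funext i
  have hlim : Tendsto (fun t => ((M ^ t) *ᵥ y) i) atTop (𝓝 0) := by
    simpa [mulVec, dotProduct] using tendsto_finsetSum univ fun j _ => (hM i j).mul_const (y j)
  simp only [hpow] at hlim
  exact tendsto_nhds_unique tendsto_const_nhds hlim

theorem exists_rat_of_mulVec_eq {M : Matrix n n ℝ} (hM : ∀ i j, ∃ q : ℚ, M i j = q)
    (hinj : Function.Injective M.mulVec) {x b : n → ℝ} (hb : ∀ i, ∃ q : ℚ, b i = q)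
    (hx : M *ᵥ x = b) (i : n) : ∃ q : ℚ, x i = q := by
  choose a ha using hM
  choose c hc using hb
  set A : Matrix n n ℚ := of a
  have hMA : M = A.map (↑) := ext ha
  have hdet : IsUnit A.det := by
    have := (isUnit_iff_isUnit_det M).mp (mulVec_injective_iff_isUnit.mp hinj)
    rw [hMA, ← Rat.cast_det] at this
    exact isUnit_iff_ne_zero.mpr (by exact_mod_cast this.ne_zero)
  have hsol : M *ᵥ (fun k => ((A⁻¹ *ᵥ c) k : ℝ)) = b := by
    funext k
    have := RingHom.map_mulVec (Rat.castHom ℝ) A (A⁻¹ *ᵥ c) k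
    rw [mulVec_mulVec, mul_nonsing_inv A hdet, one_mulVec] at this
    rw [hMA, hc]
    exact this.symm
  exact ⟨(A⁻¹ *ᵥ c) i, congrFun (hinj (hx.trans hsol.symm)) i⟩

end Matrix

section HittingTime

variable {V : Type*} [Fintype V] [DecidableEq V] {Q : V → V → ℝ} {C : Finset V}

theorem hitSurviveGen_nonneg (hQ : ∀ v w, 0 ≤ Q v w) (t : ℕ) (v : V) :
    0 ≤ hitSurviveGen Q C t v := by
  induction t generalizing v with
  | zero => unfold hitSurviveGen; split <;> norm_num
  | succ t ih =>
    unfold hitSurviveGen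
    split
    · exact le_rfl
    · exact sum_nonneg fun w _ => mul_nonneg (hQ v w) (ih w)

theorem hitSurviveGen_of_mem {v : V} (hv : v ∈ C) (t : ℕ) : hitSurviveGen Q C t v = 0 := by
  cases t <;> simp [hitSurviveGen, hv]

theorem hitSurviveGen_succ_of_notMem {v : V} (hv : v ∉ C) (t : ℕ) :
    hitSurviveGen Q C (t + 1) v = ∑ w, Q v w * hitSurviveGen Q C t w :=
  if_neg hv

theorem hitExpGen_of_mem {v : V} (hv : v ∈ C) : hitExpGen Q C v = 0 := by
  simp [hitExpGen, hitSurviveGen_of_mem hv]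

theorem hitExpGen_eq_one_add (hQ : ∀ v w, 0 ≤ Q v w) {v : V} (hv : v ∉ C) :
    hitExpGen Q C v = 1 + ∑ w, ENNReal.ofReal (Q v w) * hitExpGen Q C w := by
  have hstep : ∀ t, ENNReal.ofReal (hitSurviveGen Q C (t + 1) v) =
      ∑ w, ENNReal.ofReal (Q v w) * ENNReal.ofReal (hitSurviveGen Q C t w) := by
    intro t
    rw [hitSurviveGen_succ_of_notMem hv, ENNReal.ofReal_sum_of_nonneg fun w _ =>
      mul_nonneg (hQ v w) (hitSurviveGen_nonneg hQ t w)]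
    exact sum_congr rfl fun w _ => ENNReal.ofReal_mul (hQ v w)
  rw [hitExpGen, tsum_eq_zero_add' ENNReal.summable, hitSurviveGen.eq_1, if_neg hv,
    ENNReal.ofReal_one, tsum_congr hstep, Summable.tsum_finsetSum fun w _ => ENNReal.summable]
  simp only [ENNReal.tsum_mul_left, hitExpGen]

theorem toReal_hitExpGen_eq (hQ : ∀ v w, 0 ≤ Q v w) {v : V} (hv : v ∉ C)
    (hfin : hitExpGen Q C v ≠ ⊤) :
    (hitExpGen Q C v).toReal = 1 + ∑ w, Q v w * (hitExpGen Q C w).toReal := by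
  rw [hitExpGen_eq_one_add hQ hv] at hfin ⊢
  have hsum := (ENNReal.add_ne_top.mp hfin).2
  rw [ENNReal.toReal_add ENNReal.one_ne_top hsum, ENNReal.toReal_one,
    ENNReal.toReal_sum (ENNReal.sum_ne_top.mp hsum)]
  simp only [ENNReal.toReal_mul, ENNReal.toReal_ofReal (hQ v _)]

theorem tendsto_hitSurviveGen_of_ne_top (hQ : ∀ v w, 0 ≤ Q v w) {v : V}
    (hfin : hitExpGen Q C v ≠ ⊤) :
    Tendsto (fun t => hitSurviveGen Q C t v) atTop (𝓝 0) := by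
  have h := (ENNReal.tendsto_toReal ENNReal.zero_ne_top).comp
    (ENNReal.tendsto_atTop_zero_of_tsum_ne_top hfin)
  simpa [Function.comp_def, ENNReal.toReal_ofReal (hitSurviveGen_nonneg hQ _ v)] using h

end HittingTime

section Killed

def killedMatrix {V : Type*} (Q : V → V → ℝ) (p : V → Prop) [DecidablePred p] :
    Matrix V V ℝ :=
  of fun i j => if p i ∧ p j then Q i j else 0

variable {V : Type*} [Fintype V] {Q : V → V → ℝ} {C : Finset V} {p : V → Prop}
  [DecidablePred p]

theorem killedMatrix_pow_apply_nonneg [DecidableEq V] (hQ : ∀ v w, 0 ≤ Q v w) (t : ℕ) (i j : V) :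
    0 ≤ (killedMatrix Q p ^ t) i j := by
  induction t generalizing i with
  | zero => rw [pow_zero, one_apply]; split <;> norm_num
  | succ t ih =>
    rw [pow_succ', mul_apply]
    refine sum_nonneg fun k _ => mul_nonneg ?_ (ih k)
    simp only [killedMatrix, of_apply]
    split_ifs <;> simp [hQ]

theorem killedMatrix_pow_apply_le_hitSurviveGen [DecidableEq V] (hQ : ∀ v w, 0 ≤ Q v w)
    (hpC : ∀ i, p i → i ∉ C) (t : ℕ) {i : V} (hi : p i) (j : V) :
    (killedMatrix Q p ^ t) i j ≤ hitSurviveGen Q C t i := by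
  induction t generalizing i with
  | zero =>
    rw [pow_zero, one_apply, hitSurviveGen, if_neg (hpC i hi)]
    split <;> norm_num
  | succ t ih =>
    rw [pow_succ', mul_apply, hitSurviveGen_succ_of_notMem (hpC i hi)]
    refine sum_le_sum fun k _ => ?_
    by_cases hk : p k
    · simp only [killedMatrix, of_apply, if_pos (And.intro hi hk)]
      exact mul_le_mul_of_nonneg_left (ih hk) (hQ i k)
    · simp only [killedMatrix, of_apply, hk, and_false, if_false, zero_mul]
      exact mul_nonneg (hQ i k) (hitSurviveGen_nonneg hQ t k)

theorem killedMatrix_pow_succ_apply_of_not [DecidableEq V] {i : V} (hi : ¬p i) (t : ℕ) (j : V) :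
    (killedMatrix Q p ^ (t + 1)) i j = 0 := by
  simp [pow_succ', mul_apply, killedMatrix, hi]

theorem tendsto_killedMatrix_pow_apply [DecidableEq V] (hQ : ∀ v w, 0 ≤ Q v w) (hpC : ∀ i, p i → i ∉ C)
    (hlim : ∀ i, p i → Tendsto (fun t => hitSurviveGen Q C t i) atTop (𝓝 0)) (i j : V) :
    Tendsto (fun t => (killedMatrix Q p ^ t) i j) atTop (𝓝 0) := by
  by_cases hi : p i
  · exact squeeze_zero (killedMatrix_pow_apply_nonneg hQ · i j)
      (killedMatrix_pow_apply_le_hitSurviveGen hQ hpC · hi j) (hlim i hi)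
  · rw [← tendsto_add_atTop_iff_nat 1]
    simp only [killedMatrix_pow_succ_apply_of_not hi, tendsto_const_nhds]

theorem killedMatrix_mulVec {g : V → ℝ} (hg : ∀ j, ¬p j → g j = 0) :
    killedMatrix Q p *ᵥ g = fun i => if p i then ∑ j, Q i j * g j else 0 := by
  funext i
  simp only [Matrix.mulVec, dotProduct, killedMatrix, of_apply]
  split_ifs with hi
  · refine sum_congr rfl fun j _ => ?_
    by_cases hj : p j <;> simp [hi, hj, hg]
  · simp [hi]

end Killed

theorem exists_rat_hitExpGen_eq {V : Type*} [Fintype V] [DecidableEq V] {Q : V → V → ℝ}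
    (C : Finset V) (hQ : ∀ v w, 0 ≤ Q v w) (hrat : ∀ v w, ∃ q : ℚ, Q v w = q) {v : V}
    (hfin : hitExpGen Q C v ≠ ⊤) :
    ∃ q : ℚ, hitExpGen Q C v = ENNReal.ofReal q := by
  classical
  set p : V → Prop := fun i => i ∉ C ∧ hitExpGen Q C i ≠ ⊤
  set g : V → ℝ := fun i => (hitExpGen Q C i).toReal
  have hg_off : ∀ i, ¬p i → g i = 0 := by
    intro i hi
    rcases not_and_or.mp hi with hC | htop
    · simp [g, hitExpGen_of_mem (not_not.mp hC)]
    · simp [g, not_not.mp htop]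
  have hsystem : (1 - killedMatrix Q p) *ᵥ g = fun i => if p i then 1 else 0 := by
    rw [Matrix.sub_mulVec, Matrix.one_mulVec, killedMatrix_mulVec hg_off]
    funext i
    by_cases hi : p i
    · simp [hi, g, toReal_hitExpGen_eq hQ hi.1 hi.2]
    · simp [hi, hg_off i hi]
  have hinj := Matrix.injective_mulVec_one_sub_of_tendsto_pow
    (tendsto_killedMatrix_pow_apply hQ (fun i (hi : p i) => hi.1)
      fun i (hi : p i) => tendsto_hitSurviveGen_of_ne_top hQ hi.2)
  have hentries : ∀ i j, ∃ q : ℚ, (1 - killedMatrix Q p) i j = q := by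
    intro i j
    obtain ⟨q, hq⟩ := hrat i j
    refine ⟨(if i = j then 1 else 0) - if p i ∧ p j then q else 0, ?_⟩
    simp only [Matrix.sub_apply, one_apply, killedMatrix, of_apply]
    split_ifs <;> simp [hq]
  obtain ⟨q, hq⟩ := Matrix.exists_rat_of_mulVec_eq hentries hinj
    (fun i => ⟨if p i then 1 else 0, by split <;> simp⟩) hsystem v
  exact ⟨q, by rw [← hq, ENNReal.ofReal_toReal hfin]⟩

section AuxChain

variable {α : Type*} [DecidableEq α] {P : α → α → ℝ}

def visitState (A : Finset α) (z : α) : {p : α × Finset α // p.1 ∈ p.2} :=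
  ⟨(z, insert z A), mem_insert_self z A⟩

theorem visitState_injective (A : Finset α) : Function.Injective (visitState A) :=
  fun _ _ h => congrArg (fun w => w.1.1) h

theorem aux1_nonneg (hP : ∀ x y, 0 ≤ P x y) (v w : {p : α × Finset α // p.1 ∈ p.2}) :
    0 ≤ aux1 P v w := by
  unfold aux1
  split
  · exact hP _ _
  · exact le_rfl

theorem IsRationalKernel.aux1 (hP : IsRationalKernel P) (v w : {p : α × Finset α // p.1 ∈ p.2}) :
    ∃ q : ℚ, aux1 P v w = q := by
  unfold _root_.aux1
  split
  · exact hP _ _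
  · exact ⟨0, by simp⟩

end AuxChain

section CoverTime

variable (P : Ω → Ω → ℝ)

theorem sum_aux1_mul (y : Ω) (A : Finset Ω) (hyA : y ∈ A)
    (F : {p : Ω × Finset Ω // p.1 ∈ p.2} → ℝ) :
    ∑ w, aux1 P ⟨(y, A), hyA⟩ w * F w = ∑ z, P y z * F (visitState A z) := by
  refine (Fintype.sum_of_injective _ (visitState_injective A) _ _ (fun w hw => ?_)
    fun z => by simp [aux1, visitState]).symm
  have hne : w.1.2 ≠ insert w.1.1 A := fun h => hw ⟨w.1.1, Subtype.ext (Prod.ext rfl h.symm)⟩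
  simp [aux1, hne]

theorem covSurvive_eq_hitSurviveGen_aux1 (t : ℕ) (y : Ω) (A : Finset Ω) (hyA : y ∈ A) :
    covSurvive P t y A =
      hitSurviveGen (aux1 P)
        (univ.filter fun v : {p : Ω × Finset Ω // p.1 ∈ p.2} => v.1.2 = univ) t ⟨(y, A), hyA⟩ := by
  induction t generalizing y A with
  | zero => simp [covSurvive, hitSurviveGen]
  | succ t ih =>
    by_cases hA : A = univ
    · simp [covSurvive, hitSurviveGen, hA]
    · rw [covSurvive, if_neg hA, hitSurviveGen_succ_of_notMem (by simpa using hA),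
        sum_aux1_mul]
      exact sum_congr rfl fun z _ => by rw [ih]; rfl

theorem covExp_eq_hitExpGen_aux1 (x : Ω) :
    covExp P x =
      hitExpGen (aux1 P) (univ.filter fun v : {p : Ω × Finset Ω // p.1 ∈ p.2} => v.1.2 = univ)
        ⟨(x, {x}), mem_singleton_self x⟩ :=
  tsum_congr fun t => by rw [covSurvive_eq_hitSurviveGen_aux1 P t x {x} (mem_singleton_self x)]

end CoverTime

/-- For a rational finite chain with finite cover time from `x`, the cover time equals
the hitting time of `C = {(y,Ω) : y ∈ Ω}` in the auxiliary chain `Q(P,1)` started from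
`(x,{x})`, and this value is rational. -/
theorem stmt19 (P : Ω → Ω → ℝ) (hP : IsStochastic P) (hQ : IsRationalKernel P)
    (x : Ω) (hx : covExp P x ≠ ⊤) :
    covExp P x =
      hitExpGen (aux1 P)
        (Finset.univ.filter fun v : {p : Ω × Finset Ω // p.1 ∈ p.2} => v.1.2 = Finset.univ)
        ⟨(x, {x}), Finset.mem_singleton_self x⟩ ∧
      ∃ q : ℚ, covExp P x = ENNReal.ofReal (q : ℝ) := by
  have heq := covExp_eq_hitExpGen_aux1 P x
  refine ⟨heq, ?_⟩
  rw [heq] at hx ⊢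
  exact exists_rat_hitExpGen_eq _ (aux1_nonneg hP.1) hQ.aux1 hx
end
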